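/- arXiv:1603.05015 — 3 statements merged into one kernel-verified Lean document; each statement's English description precedes it below -/
import Mathlib

section
/- Let n be a positive integer, let ρ > 0 and τ > 0 be real numbers, and let A be a real symmetric positive semidefinite n×n matrix with eigenvalues σ₁, …, σₙ ≥ 0. Then the infimum over all real n×n matrices L of the quantity (ρ/2)·‖A − LᵀL‖_F² + τ·‖L‖_* equals the sum over i = 1, …, n of min_{γ ≥ 0} [ (ρ/2)·(σᵢ − γ²)² + τ·γ ], and this infimum is attained. -/
open Matrix BigOperators Finset

noncomputable def frobNormSq {m n : ℕ} (M : Matrix (Fin m) (Fin n) ℝ) : ℝ :=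
  ∑ i, ∑ j, (M i j)^2

noncomputable def singularValues {m n : ℕ} (M : Matrix (Fin m) (Fin n) ℝ) : Fin n → ℝ :=
  fun i => Real.sqrt ((Matrix.isHermitian_conjTranspose_mul_self M).eigenvalues i)

noncomputable def nuclearNorm {m n : ℕ} (M : Matrix (Fin m) (Fin n) ℝ) : ℝ :=
  ∑ i, singularValues M i

/-!
Diagonalize `A = U diag(σ) Uᵀ` and `LᵀL = V diag(μ) Vᵀ`, so that the singular values of `L` are
the `√μⱼ`. The squared entries of the orthogonal matrix `W = UᵀV` form a doubly stochastic matrix,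
and orthogonal invariance of the Frobenius norm turns the objective into
`∑ᵢⱼ Wᵢⱼ² fᵢ(√μⱼ)` with `fᵢ(γ) = ρ/2 (σᵢ - γ²)² + τγ`. As every row of `(Wᵢⱼ²)` sums to one, this
is at least `∑ᵢ min fᵢ`; the matrix `L = U diag(γ) Uᵀ` built from minimizers `γᵢ` of the `fᵢ`
attains the bound.
-/

section Orthogonal

variable {m : Type*} [Fintype m] [DecidableEq m] {U : Matrix m m ℝ}

theorem Matrix.sum_sq_row_eq_one_of_mem_orthogonalGroup (hU : U ∈ orthogonalGroup m ℝ) (i : m) :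
    ∑ j, U i j ^ 2 = 1 := by
  simpa [mul_apply, sq] using congr_fun₂ ((mem_orthogonalGroup_iff m ℝ).mp hU) i i

theorem Matrix.sum_sq_col_eq_one_of_mem_orthogonalGroup (hU : U ∈ orthogonalGroup m ℝ) (j : m) :
    ∑ i, U i j ^ 2 = 1 := by
  simpa [mul_apply, sq] using congr_fun₂ ((mem_orthogonalGroup_iff' m ℝ).mp hU) j j

theorem Matrix.IsHermitian.eq_conj_diagonal_eigenvalues {A : Matrix m m ℝ} (hA : A.IsHermitian) :
    A = (hA.eigenvectorUnitary : Matrix m m ℝ) * diagonal hA.eigenvalues *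
      (hA.eigenvectorUnitary : Matrix m m ℝ)ᵀ := by
  conv_lhs => rw [hA.spectral_theorem]
  simp [Unitary.conjStarAlgAut_apply, star_eq_conjTranspose, conjTranspose_eq_transpose_of_trivial]

theorem Matrix.IsHermitian.sum_comp_eigenvalues_of_eq_conj_diagonal {B : Matrix m m ℝ}
    (hB : B.IsHermitian) (hU : U ∈ orthogonalGroup m ℝ) {d : m → ℝ}
    (hBd : B = U * diagonal d * Uᵀ) (f : ℝ → ℝ) :
    ∑ i, f (hB.eigenvalues i) = ∑ i, f (d i) := by
  have hcharpoly : B.charpoly = (diagonal d).charpoly := by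
    rw [hBd, charpoly_mul_comm, ← Matrix.mul_assoc, (mem_orthogonalGroup_iff' m ℝ).mp hU,
      Matrix.one_mul]
  have hroots := hB.roots_charpoly_eq_eigenvalues
  rw [hcharpoly, charpoly_diagonal, Polynomial.roots_prod _ _ (by
    simp [Finset.prod_ne_zero_iff, Polynomial.X_sub_C_ne_zero])] at hroots
  simp only [Polynomial.roots_X_sub_C, Multiset.bind_singleton] at hroots
  have h := congr_arg (fun s => (s.map f).sum) hroots
  simp only [Multiset.map_map, RCLike.ofReal_real_eq_id, CompTriple.comp_eq] at h
  exact h.symm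

end Orthogonal

section Frobenius

variable {m n : ℕ}

theorem frobNormSq_eq_trace (M : Matrix (Fin m) (Fin n) ℝ) : frobNormSq M = (Mᵀ * M).trace := by
  simp only [frobNormSq, trace, Matrix.diag, mul_apply, transpose_apply, sq]
  exact Finset.sum_comm

theorem frobNormSq_transpose_mul_mul {U : Matrix (Fin m) (Fin m) ℝ} {V : Matrix (Fin n) (Fin n) ℝ}
    (hU : U ∈ orthogonalGroup (Fin m) ℝ) (hV : V ∈ orthogonalGroup (Fin n) ℝ)
    (M : Matrix (Fin m) (Fin n) ℝ) : frobNormSq (Uᵀ * M * V) = frobNormSq M := by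
  have hUUt := (mem_orthogonalGroup_iff _ ℝ).mp hU
  have hVVt := (mem_orthogonalGroup_iff _ ℝ).mp hV
  rw [frobNormSq_eq_trace, frobNormSq_eq_trace, transpose_mul, transpose_mul, transpose_transpose,
    show Vᵀ * (Mᵀ * U) * (Uᵀ * M * V) = Vᵀ * (Mᵀ * (U * Uᵀ) * M) * V by
      simp only [Matrix.mul_assoc],
    hUUt, Matrix.mul_one, trace_mul_cycle, hVVt, Matrix.one_mul]

theorem frobNormSq_conj_diagonal_sub_conj_diagonal {U V : Matrix (Fin n) (Fin n) ℝ}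
    (hU : U ∈ orthogonalGroup (Fin n) ℝ) (hV : V ∈ orthogonalGroup (Fin n) ℝ) (a b : Fin n → ℝ) :
    frobNormSq (U * diagonal a * Uᵀ - V * diagonal b * Vᵀ) =
      ∑ i, ∑ j, (Uᵀ * V) i j ^ 2 * (a i - b j) ^ 2 := by
  have hUtU := (mem_orthogonalGroup_iff' _ ℝ).mp hU
  have hVtV := (mem_orthogonalGroup_iff' _ ℝ).mp hV
  have hconj : Uᵀ * (U * diagonal a * Uᵀ - V * diagonal b * Vᵀ) * V =
      diagonal a * (Uᵀ * V) - (Uᵀ * V) * diagonal b := by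
    simp only [Matrix.mul_sub, Matrix.sub_mul, ← Matrix.mul_assoc, hUtU, Matrix.one_mul]
    rw [Matrix.mul_assoc (Uᵀ * V * diagonal b), hVtV, Matrix.mul_one]
  rw [← frobNormSq_transpose_mul_mul hU hV, hconj, frobNormSq]
  refine Finset.sum_congr rfl fun i _ => Finset.sum_congr rfl fun j _ => ?_
  simp only [Matrix.sub_apply, diagonal_mul, mul_diagonal]
  ring

end Frobenius

noncomputable def scalarObjective (ρ τ σ γ : ℝ) : ℝ := ρ / 2 * (σ - γ ^ 2) ^ 2 + τ * γ

noncomputable def factorizationObjective {n : ℕ} (ρ τ : ℝ) (A L : Matrix (Fin n) (Fin n) ℝ) : ℝ :=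
  ρ / 2 * frobNormSq (A - Lᵀ * L) + τ * nuclearNorm L

open Filter in
theorem exists_isLeast_scalarObjective {ρ τ : ℝ} (hρ : 0 ≤ ρ) (hτ : 0 < τ) (σ : ℝ) :
    ∃ γ, 0 ≤ γ ∧ IsLeast (scalarObjective ρ τ σ '' Set.Ici 0) (scalarObjective ρ τ σ γ) := by
  have hcont : Continuous (scalarObjective ρ τ σ) := by unfold scalarObjective; fun_prop
  have hlim : Tendsto (scalarObjective ρ τ σ) atTop atTop := by
    refine tendsto_atTop_mono' atTop ?_ (tendsto_id.const_mul_atTop hτ)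
    filter_upwards with t
    have : 0 ≤ ρ / 2 * (σ - t ^ 2) ^ 2 := by positivity
    simp only [scalarObjective, id]
    linarith
  -- Minimize `γ ↦ scalarObjective ρ τ σ |γ|` over all of `ℝ`, where it is coercive.
  obtain ⟨x, hx⟩ := (hcont.comp continuous_abs).exists_forall_le (by
    rw [cocompact_eq_atBot_atTop, ← comap_abs_atTop]
    exact hlim.comp tendsto_comap)
  refine ⟨|x|, abs_nonneg x, ⟨|x|, abs_nonneg x, rfl⟩, ?_⟩
  rintro _ ⟨t, ht, rfl⟩
  simpa [abs_of_nonneg (show 0 ≤ t from ht)] using hx t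

variable {n : ℕ}

theorem sum_le_factorizationObjective {ρ τ : ℝ} {A : Matrix (Fin n) (Fin n) ℝ}
    (hA : A.IsHermitian) {c : Fin n → ℝ}
    (hc : ∀ i, c i ∈ lowerBounds (scalarObjective ρ τ (hA.eigenvalues i) '' Set.Ici 0))
    (L : Matrix (Fin n) (Fin n) ℝ) : ∑ i, c i ≤ factorizationObjective ρ τ A L := by
  have hB := isHermitian_conjTranspose_mul_self L
  set U := (hA.eigenvectorUnitary : Matrix (Fin n) (Fin n) ℝ)
  set V := (hB.eigenvectorUnitary : Matrix (Fin n) (Fin n) ℝ)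
  set σ := hA.eigenvalues
  set μ := hB.eigenvalues
  have hW : Uᵀ * V ∈ orthogonalGroup (Fin n) ℝ :=
    mul_mem (transpose_mem_unitaryGroup_iff.mpr hA.eigenvectorUnitary.2) hB.eigenvectorUnitary.2
  have hfrob := frobNormSq_conj_diagonal_sub_conj_diagonal hA.eigenvectorUnitary.2
    hB.eigenvectorUnitary.2 σ μ
  have hLtL : Lᵀ * L = V * diagonal μ * Vᵀ := by
    rw [← conjTranspose_eq_transpose_of_trivial L]
    exact hB.eq_conj_diagonal_eigenvalues
  rw [← hA.eq_conj_diagonal_eigenvalues, ← hLtL] at hfrob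
  have hnuc : nuclearNorm L = ∑ i, ∑ j, (Uᵀ * V) i j ^ 2 * √(μ j) := by
    rw [Finset.sum_comm]
    simp_rw [← Finset.sum_mul, sum_sq_col_eq_one_of_mem_orthogonalGroup hW, one_mul]
    rfl
  have hobj : factorizationObjective ρ τ A L =
      ∑ i, ∑ j, (Uᵀ * V) i j ^ 2 * scalarObjective ρ τ (σ i) √(μ j) := by
    rw [factorizationObjective, hfrob, hnuc,
      Finset.mul_sum, Finset.mul_sum, ← Finset.sum_add_distrib]
    refine Finset.sum_congr rfl fun i _ => ?_
    rw [Finset.mul_sum, Finset.mul_sum, ← Finset.sum_add_distrib]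
    refine Finset.sum_congr rfl fun j _ => ?_
    rw [scalarObjective, Real.sq_sqrt (eigenvalues_conjTranspose_mul_self_nonneg L j)]
    ring
  calc ∑ i, c i = ∑ i, ∑ j, (Uᵀ * V) i j ^ 2 * c i := by
        simp_rw [← Finset.sum_mul, sum_sq_row_eq_one_of_mem_orthogonalGroup hW, one_mul]
    _ ≤ ∑ i, ∑ j, (Uᵀ * V) i j ^ 2 * scalarObjective ρ τ (σ i) √(μ j) :=
        Finset.sum_le_sum fun i _ => Finset.sum_le_sum fun j _ =>
          mul_le_mul_of_nonneg_left (hc i ⟨_, Real.sqrt_nonneg _, rfl⟩) (sq_nonneg _)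
    _ = factorizationObjective ρ τ A L := hobj.symm

theorem factorizationObjective_conj_diagonal (ρ τ : ℝ) {A : Matrix (Fin n) (Fin n) ℝ}
    (hA : A.IsHermitian) {γ : Fin n → ℝ} (hγ : ∀ i, 0 ≤ γ i) :
    factorizationObjective ρ τ A ((hA.eigenvectorUnitary : Matrix (Fin n) (Fin n) ℝ) *
        diagonal γ * (hA.eigenvectorUnitary : Matrix (Fin n) (Fin n) ℝ)ᵀ) =
      ∑ i, scalarObjective ρ τ (hA.eigenvalues i) (γ i) := by
  have hU := hA.eigenvectorUnitary.2
  set U := (hA.eigenvectorUnitary : Matrix (Fin n) (Fin n) ℝ)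
  set L := U * diagonal γ * Uᵀ
  have hLtL : Lᵀ * L = U * diagonal (fun i => γ i ^ 2) * Uᵀ := by
    have hUtU := (mem_orthogonalGroup_iff' _ ℝ).mp hU
    simp only [L, transpose_mul, transpose_transpose, diagonal_transpose, Matrix.mul_assoc]
    rw [← Matrix.mul_assoc Uᵀ U, hUtU, Matrix.one_mul, ← Matrix.mul_assoc (diagonal γ),
      diagonal_mul_diagonal]
    simp only [sq]
  have hfrob := frobNormSq_conj_diagonal_sub_conj_diagonal hU hU hA.eigenvalues (γ · ^ 2)
  rw [← hA.eq_conj_diagonal_eigenvalues, ← hLtL, (mem_orthogonalGroup_iff' _ ℝ).mp hU] at hfrob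
  have hnuc : nuclearNorm L = ∑ i, γ i := by
    rw [← conjTranspose_eq_transpose_of_trivial] at hLtL
    simpa [nuclearNorm, singularValues, Real.sqrt_sq (hγ _)] using
      (isHermitian_conjTranspose_mul_self L).sum_comp_eigenvalues_of_eq_conj_diagonal hU hLtL
        Real.sqrt
  simp only [one_apply, ite_pow, one_pow, zero_pow two_ne_zero, ite_mul, one_mul, zero_mul,
    Finset.sum_ite_eq, Finset.mem_univ, if_true] at hfrob
  rw [factorizationObjective, hfrob, hnuc, Finset.mul_sum, Finset.mul_sum,
    ← Finset.sum_add_distrib]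
  rfl

theorem stmt_0_general (n : ℕ) (ρ τ : ℝ) (hρ : 0 < ρ) (hτ : 0 < τ)
    (A : Matrix (Fin n) (Fin n) ℝ) (hA : A.PosSemidef) :
    IsLeast
      (Set.range fun L : Matrix (Fin n) (Fin n) ℝ =>
        ρ / 2 * frobNormSq (A - Lᵀ * L) + τ * nuclearNorm L)
      (∑ i, sInf ((fun γ : ℝ =>
        ρ / 2 * (hA.1.eigenvalues i - γ ^ 2) ^ 2 + τ * γ) '' Set.Ici 0)) := by
  change IsLeast (Set.range (factorizationObjective ρ τ A))
    (∑ i, sInf (scalarObjective ρ τ (hA.1.eigenvalues i) '' Set.Ici 0))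
  choose γ hγ₀ hγ using fun i => exists_isLeast_scalarObjective hρ.le hτ (hA.1.eigenvalues i)
  simp only [fun i => (hγ i).csInf_eq]
  exact ⟨⟨_, factorizationObjective_conj_diagonal ρ τ hA.1 hγ₀⟩,
    Set.forall_mem_range.2 (sum_le_factorizationObjective hA.1 fun i => (hγ i).2)⟩

/-- The infimum over all real n×n matrices L of
(ρ/2)·‖A − LᵀL‖_F² + τ·‖L‖_* equals ∑ᵢ min_{γ ≥ 0} [(ρ/2)·(σᵢ − γ²)² + τ·γ],
where σᵢ are the eigenvalues of the PSD matrix A, and this infimum is attained. -/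
theorem stmt_0 (n : ℕ) (hn : 0 < n) (ρ τ : ℝ) (hρ : 0 < ρ) (hτ : 0 < τ)
    (A : Matrix (Fin n) (Fin n) ℝ) (hA : A.PosSemidef) :
    IsLeast
      (Set.range fun L : Matrix (Fin n) (Fin n) ℝ =>
        ρ / 2 * frobNormSq (A - Lᵀ * L) + τ * nuclearNorm L)
      (∑ i, sInf ((fun γ : ℝ =>
        ρ / 2 * (hA.1.eigenvalues i - γ ^ 2) ^ 2 + τ * γ) '' Set.Ici 0)) :=
  stmt_0_general n ρ τ hρ hτ A hA
end

section
/- Let n be a positive integer, let D be an n×n doubly stochastic real matrix, and let a₁ ≥ a₂ ≥ … ≥ aₙ ≥ 0 and b₁ ≥ b₂ ≥ … ≥ bₙ ≥ 0 be nonincreasing sequences of nonnegative real numbers. Then Σᵢ Σⱼ d_{ij} · aᵢ · bⱼ ≤ Σᵢ aᵢ · bᵢ. -/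
open Matrix

-- By Birkhoff's theorem `M` is a convex combination of permutation matrices, and for those this is
-- the rearrangement inequality.
theorem Matrix.dotProduct_mulVec_le_of_mem_doublyStochastic {R ι : Type*} [Field R] [LinearOrder R]
    [IsStrictOrderedRing R] [Fintype ι] [DecidableEq ι] {M : Matrix ι ι R}
    (hM : M ∈ doublyStochastic R ι) {f g : ι → R} (hfg : Monovary f g) :
    f ⬝ᵥ (M *ᵥ g) ≤ f ⬝ᵥ g := by
  have hlin : IsLinearMap R fun N : Matrix ι ι R => f ⬝ᵥ (N *ᵥ g) :=
    ⟨fun N N' => by simp only [add_mulVec, dotProduct_add],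
      fun c N => by simp only [smul_mulVec, dotProduct_smul]⟩
  rw [← SetLike.mem_coe, doublyStochastic_eq_convexHull_permMatrix] at hM
  refine convexHull_min ?_ (convex_halfSpace_le hlin (f ⬝ᵥ g)) hM
  rintro _ ⟨σ, rfl⟩
  simpa [permMatrix_mulVec, dotProduct] using hfg.sum_mul_comp_perm_le_sum_mul

theorem stmt_11_general (n : ℕ) (D : Matrix (Fin n) (Fin n) ℝ)
    (a b : Fin n → ℝ)
    (hD0 : ∀ i j, 0 ≤ D i j)
    (hDrow : ∀ i, ∑ j, D i j = 1)
    (hDcol : ∀ j, ∑ i, D i j = 1)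
    (ha : Antitone a) (hb : Antitone b) :
    ∑ i, ∑ j, D i j * a i * b j ≤ ∑ i, a i * b i := by
  have hD : D ∈ doublyStochastic ℝ (Fin n) := mem_doublyStochastic_iff_sum.2 ⟨hD0, hDrow, hDcol⟩
  have key := dotProduct_mulVec_le_of_mem_doublyStochastic hD (ha.monovary hb)
  simpa [dotProduct, mulVec, Finset.mul_sum, mul_assoc, mul_left_comm] using key

/-- If D is an n×n doubly stochastic matrix and a, b are nonincreasing
nonnegative sequences, then ∑ᵢ∑ⱼ d_{ij}·aᵢ·bⱼ ≤ ∑ᵢ aᵢ·bᵢ. -/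
theorem stmt_11 (n : ℕ) (hn : 0 < n) (D : Matrix (Fin n) (Fin n) ℝ)
    (a b : Fin n → ℝ)
    (hD0 : ∀ i j, 0 ≤ D i j)
    (hDrow : ∀ i, ∑ j, D i j = 1)
    (hDcol : ∀ j, ∑ i, D i j = 1)
    (ha : Antitone a) (hb : Antitone b)
    (ha0 : ∀ i, 0 ≤ a i) (hb0 : ∀ i, 0 ≤ b i) :
    ∑ i, ∑ j, D i j * a i * b j ≤ ∑ i, a i * b i :=
  stmt_11_general n D a b hD0 hDrow hDcol ha hb
end

section
/- Let n be a positive integer, let W be an n×n real orthogonal matrix with entries w_{ij}, and let σ₁ ≥ … ≥ σₙ ≥ 0 and γ₁ ≥ … ≥ γₙ ≥ 0 be nonincreasing sequences of nonnegative reals, with Σ and Γ the corresponding diagonal matrices. Then trace(Σ · W Γ² Wᵀ) = Σᵢ Σⱼ w_{ij}² · γⱼ² · σᵢ ≤ Σᵢ σᵢ · γᵢ², and consequently ‖Σ − W Γ² Wᵀ‖_F² ≥ Σᵢ (σᵢ − γᵢ²)². -/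
open Matrix BigOperators Finset

/-!
The entrywise squares of an orthogonal matrix form a doubly stochastic matrix, which by
Birkhoff's theorem is a convex combination of permutation matrices. The pairing
`σ ⬝ᵥ (D *ᵥ γ²)` is linear in `D`, and at a permutation matrix it is bounded by `σ ⬝ᵥ γ²` by the
rearrangement inequality, since `σ` and `γ²` are ordered alike. The Frobenius bound follows by
expanding `‖Σ - WΓ²Wᵀ‖²` and using that conjugation by `W` preserves the Frobenius norm.
-/

section Frobenius

variable {m n : ℕ}

theorem frobNormSq_eq_trace_mul_transpose (M : Matrix (Fin m) (Fin n) ℝ) :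
    frobNormSq M = trace (M * Mᵀ) := by
  simp [frobNormSq, trace, mul_apply, sq]

theorem frobNormSq_sub (M N : Matrix (Fin m) (Fin n) ℝ) :
    frobNormSq (M - N) = frobNormSq M - 2 * trace (M * Nᵀ) + frobNormSq N := by
  simp only [frobNormSq, trace, diag_apply, mul_apply, transpose_apply, Matrix.sub_apply, mul_sum,
    ← sum_sub_distrib, ← sum_add_distrib]
  exact sum_congr rfl fun i _ => sum_congr rfl fun j _ => by ring

theorem frobNormSq_diagonal (d : Fin n → ℝ) : frobNormSq (diagonal d) = ∑ i, d i ^ 2 := by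
  simp [frobNormSq, diagonal_apply, ite_pow]

theorem frobNormSq_conj_of_transpose_mul_self_eq_one {W : Matrix (Fin m) (Fin m) ℝ}
    (hW : Wᵀ * W = 1) (X : Matrix (Fin m) (Fin m) ℝ) : frobNormSq (W * X * Wᵀ) = frobNormSq X := by
  have hconj : W * X * Wᵀ * (W * X * Wᵀ)ᵀ = W * (X * Xᵀ) * Wᵀ := by
    simp only [transpose_mul, transpose_transpose, Matrix.mul_assoc]
    rw [← Matrix.mul_assoc Wᵀ W, hW, Matrix.one_mul]
  rw [frobNormSq_eq_trace_mul_transpose, frobNormSq_eq_trace_mul_transpose, hconj, trace_mul_comm,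
    ← Matrix.mul_assoc, hW, Matrix.one_mul]

end Frobenius

section DoublyStochastic

variable {R n : Type*} [Field R] [LinearOrder R] [IsStrictOrderedRing R] [Fintype n]
  [DecidableEq n]

theorem sq_mem_doublyStochastic_of_transpose_mul_self_eq_one {W : Matrix n n R}
    (hW : Wᵀ * W = 1) : (fun i j => W i j ^ 2) ∈ doublyStochastic R n := by
  have hW' : W * Wᵀ = 1 := mul_eq_one_comm.1 hW
  refine mem_doublyStochastic_iff_sum.2 ⟨fun i j => sq_nonneg _, fun i => ?_, fun j => ?_⟩
  · simpa [mul_apply, sq] using congrFun (congrFun hW' i) i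
  · simpa [mul_apply, sq] using congrFun (congrFun hW j) j

theorem dotProduct_mulVec_le_of_mem_doublyStochastic {a b : n → R} (hab : Monovary a b)
    {D : Matrix n n R} (hD : D ∈ doublyStochastic R n) : a ⬝ᵥ (D *ᵥ b) ≤ a ⬝ᵥ b := by
  have hlin : IsLinearMap R fun M : Matrix n n R => a ⬝ᵥ (M *ᵥ b) :=
    ⟨fun M N => by simp [add_mulVec], fun c M => by simp [smul_mulVec]⟩
  rw [← SetLike.mem_coe, doublyStochastic_eq_convexHull_permMatrix] at hD
  refine convexHull_min ?_ (convex_halfSpace_le hlin _) hD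
  rintro _ ⟨τ, rfl⟩
  simpa [permMatrix_mulVec, dotProduct] using hab.sum_mul_comp_perm_le_sum_mul (σ := τ)

end DoublyStochastic

theorem trace_diagonal_mul_conj_diagonal {R n : Type*} [CommRing R] [Fintype n] [DecidableEq n]
    (a b : n → R) (W : Matrix n n R) :
    trace (diagonal a * (W * diagonal b * Wᵀ)) = ∑ i, ∑ j, W i j ^ 2 * b j * a i := by
  refine sum_congr rfl fun i _ => ?_
  rw [diag_apply, diagonal_mul, mul_apply, mul_sum]
  simp only [mul_diagonal, transpose_apply]
  exact sum_congr rfl fun j _ => by ring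

theorem stmt_12_general (n : ℕ) (W : Matrix (Fin n) (Fin n) ℝ)
    (σ γ : Fin n → ℝ) (hW : Wᵀ * W = 1)
    (hσ : Antitone σ) (hγ : Antitone γ)
    (hγ0 : ∀ i, 0 ≤ γ i) :
    Matrix.trace (Matrix.diagonal σ *
        (W * Matrix.diagonal (fun i => γ i ^ 2) * Wᵀ)) =
      ∑ i, ∑ j, (W i j) ^ 2 * γ j ^ 2 * σ i ∧
    ∑ i, ∑ j, (W i j) ^ 2 * γ j ^ 2 * σ i ≤ ∑ i, σ i * γ i ^ 2 ∧
    frobNormSq (Matrix.diagonal σ - W * Matrix.diagonal (fun i => γ i ^ 2) * Wᵀ) ≥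
      ∑ i, (σ i - γ i ^ 2) ^ 2 := by
  set A := W * diagonal (fun i => γ i ^ 2) * Wᵀ
  have htrace : trace (diagonal σ * A) = ∑ i, ∑ j, W i j ^ 2 * γ j ^ 2 * σ i :=
    trace_diagonal_mul_conj_diagonal σ _ W
  have hγsq : Antitone fun i => γ i ^ 2 := fun i j hij => pow_le_pow_left₀ (hγ0 j) (hγ hij) 2
  have hle : ∑ i, ∑ j, W i j ^ 2 * γ j ^ 2 * σ i ≤ ∑ i, σ i * γ i ^ 2 := by
    have := dotProduct_mulVec_le_of_mem_doublyStochastic (hσ.monovary hγsq)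
      (sq_mem_doublyStochastic_of_transpose_mul_self_eq_one hW)
    simpa [dotProduct, mulVec, mul_sum, mul_comm, mul_left_comm] using this
  have hA : Aᵀ = A := by simp [A, transpose_mul, mul_assoc]
  have hfrob : frobNormSq (diagonal σ - A)
      = ∑ i, σ i ^ 2 - 2 * trace (diagonal σ * A) + ∑ i, (γ i ^ 2) ^ 2 := by
    rw [frobNormSq_sub, hA, frobNormSq_conj_of_transpose_mul_self_eq_one hW, frobNormSq_diagonal,
      frobNormSq_diagonal]
  have hsq : ∑ i, (σ i - γ i ^ 2) ^ 2
      = ∑ i, σ i ^ 2 - 2 * ∑ i, σ i * γ i ^ 2 + ∑ i, (γ i ^ 2) ^ 2 := by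
    simp only [mul_sum, ← sum_sub_distrib, ← sum_add_distrib]
    exact sum_congr rfl fun i _ => by ring
  refine ⟨htrace, hle, ?_⟩
  rw [ge_iff_le, hfrob, hsq, htrace]
  linarith

/-- For W orthogonal and nonincreasing nonnegative σ, γ with Σ = diag(σ),
Γ = diag(γ): trace(Σ·WΓ²Wᵀ) = ∑ᵢ∑ⱼ wᵢⱼ²·γⱼ²·σᵢ ≤ ∑ᵢ σᵢ·γᵢ², and consequently
‖Σ − WΓ²Wᵀ‖_F² ≥ ∑ᵢ (σᵢ − γᵢ²)². -/
theorem stmt_12 (n : ℕ) (hn : 0 < n) (W : Matrix (Fin n) (Fin n) ℝ)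
    (σ γ : Fin n → ℝ) (hW : Wᵀ * W = 1)
    (hσ : Antitone σ) (hγ : Antitone γ)
    (hσ0 : ∀ i, 0 ≤ σ i) (hγ0 : ∀ i, 0 ≤ γ i) :
    Matrix.trace (Matrix.diagonal σ *
        (W * Matrix.diagonal (fun i => γ i ^ 2) * Wᵀ)) =
      ∑ i, ∑ j, (W i j) ^ 2 * γ j ^ 2 * σ i ∧
    ∑ i, ∑ j, (W i j) ^ 2 * γ j ^ 2 * σ i ≤ ∑ i, σ i * γ i ^ 2 ∧
    frobNormSq (Matrix.diagonal σ - W * Matrix.diagonal (fun i => γ i ^ 2) * Wᵀ) ≥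
      ∑ i, (σ i - γ i ^ 2) ^ 2 :=
  stmt_12_general n W σ γ hW hσ hγ hγ0
end
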